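/- Let M and M' be matroids with the same ground set E. Then M' is the dual matroid M* of M if and only if for all B ⊆ A ⊆ E one has r_M(A|B) + r_{M'}(E \ B | E \ A) = |A \ B|. -/

import Mathlib

open Set Matroid

variable {α : Type*}

/-- `J` is a maximal independent subset of `B` in the matroid `M`. -/
def Matroid.IsMaxIndepIn (M : Matroid α) (J B : Set α) : Prop :=
  M.Indep J ∧ J ⊆ B ∧ ∀ ⦃J' : Set α⦄, M.Indep J' → J ⊆ J' → J' ⊆ B → J' = J

/-- The relative rank `r_M(A|B)`: the maximum of `|I \ J|` over pairs `J ⊆ I ⊆ A` with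
`I` independent and `J` a maximal independent subset of `B`. -/
noncomputable def Matroid.relRank (M : Matroid α) (A B : Set α) : ℕ∞ :=
  sSup {n : ℕ∞ | ∃ I J : Set α,
    M.Indep I ∧ J ⊆ I ∧ I ⊆ A ∧ M.IsMaxIndepIn J B ∧ n = (I \ J).encard}

/-!
Relative rank is the rank of a contraction: `r_M(A|B) = r_{M ／ B}(A \ B)`. Fixing a base `B₀`
of `M` that meets `A` and `B` in bases, the contraction `M ／ B` has the basis `(A \ B) ∩ B₀`
of `A \ B`, while the complementary base `E \ B₀` of `M✶` plays the same role for
`E \ A ⊆ E \ B`, giving the basis `(A \ B) \ B₀`; the two sizes add up to `|A \ B|`.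
Conversely, `r(I | I \ {e})` is `0` or `1` according to whether `e` lies in the closure of
`I \ {e}`, so these relative ranks determine independence, and the identity forces them to agree
for `M'` and `M✶`.
-/

namespace Matroid

variable {M : Matroid α} {A B B₀ I J : Set α} {e : α}

lemma isMaxIndepIn_iff_isBasis' : M.IsMaxIndepIn J B ↔ M.IsBasis' J B := by
  rw [IsBasis', maximal_subset_iff, IsMaxIndepIn, and_assoc]
  exact and_congr_right fun _ ↦ and_congr_right fun _ ↦
    ⟨fun h _ hK hJK ↦ (h hK.1 hJK hK.2).symm, fun h _ hK hJK hKB ↦ (h ⟨hK, hKB⟩ hJK).symm⟩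

lemma relRank_eq_eRk_contract (hBA : B ⊆ A) : M.relRank A B = (M ／ B).eRk (A \ B) := by
  refine le_antisymm (sSup_le ?_) ?_
  · rintro _ ⟨I, J, hI, hJI, hIA, hJ, rfl⟩
    rw [isMaxIndepIn_iff_isBasis'] at hJ
    have hdisj : Disjoint B (I \ J) := by
      rw [← hJ.inter_eq_of_subset_indep hJI hI, sdiff_self_inter]
      exact disjoint_sdiff_right
    have hcon : (M ／ B).Indep (I \ J) := by
      rw [hJ.contract_indep_iff, sdiff_union_of_subset hJI]
      exact ⟨hI, hdisj⟩
    rw [← hcon.eRk_eq_encard]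
    exact eRk_mono _ (subset_sdiff.2 ⟨sdiff_subset.trans hIA, hdisj.symm⟩)
  · obtain ⟨J, hJ⟩ := M.exists_isBasis' B
    obtain ⟨K, hK⟩ := (M ／ B).exists_isBasis' (A \ B)
    obtain ⟨hKJ, hBK⟩ := hJ.contract_indep_iff.1 hK.indep
    refine le_sSup ⟨K ∪ J, J, hKJ, subset_union_right,
      union_subset (hK.subset.trans sdiff_subset) (hJ.subset.trans hBA),
      isMaxIndepIn_iff_isBasis'.2 hJ, ?_⟩
    rw [union_sdiff_right, (hBK.mono_left hJ.subset).symm.sdiff_eq_left, hK.encard_eq_eRk]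

lemma IsBase.relRank_eq_encard_inter (hB₀ : M.IsBase B₀) (hBA : B ⊆ A)
    (hA : M.IsBasis (B₀ ∩ A) A) (hB : M.IsBasis (B₀ ∩ B) B) :
    M.relRank A B = ((A \ B) ∩ B₀).encard := by
  have hbasis := hA.contract_isBasis hB
    (hB₀.indep.subset (union_subset (sdiff_subset.trans inter_subset_left) inter_subset_left))
  rw [relRank_eq_eRk_contract hBA, ← hbasis.encard_eq_eRk]
  congr 1
  tauto_set

lemma relRank_add_relRank_dual (hBA : B ⊆ A) (hA : A ⊆ M.E) :
    M.relRank A B + M✶.relRank (M.E \ B) (M.E \ A) = (A \ B).encard := by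
  obtain ⟨J, hJ⟩ := M.exists_isBasis B (hBA.trans hA)
  obtain ⟨I, hI, hJI⟩ := hJ.indep.subset_isBasis_of_subset (hJ.subset.trans hBA) hA
  obtain ⟨B₀, hB₀, rfl⟩ := hI.exists_isBase
  obtain rfl : J = B₀ ∩ B :=
    (hJ.inter_eq_of_subset_indep (hJI.trans inter_subset_left) hB₀.indep).symm
  rw [hB₀.relRank_eq_encard_inter hBA hI hJ,
    hB₀.compl_isBase_dual.relRank_eq_encard_inter (sdiff_subset_sdiff_right hBA)
      (hB₀.compl_inter_isBasis_of_inter_isBasis hJ) (hB₀.compl_inter_isBasis_of_inter_isBasis hI),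
    show ((M.E \ B) \ (M.E \ A)) ∩ (M.E \ B₀) = (A \ B) \ B₀ by tauto_set,
    add_comm, encard_sdiff_add_encard_inter]

lemma relRank_sdiff_singleton_eq_zero_iff (he : e ∈ I) (hI : I ⊆ M.E) :
    M.relRank I (I \ {e}) = 0 ↔ e ∈ M.closure (I \ {e}) := by
  have he' : e ∉ I \ {e} := fun h ↦ h.2 rfl
  rw [relRank_eq_eRk_contract sdiff_subset, sdiff_sdiff_cancel_left (singleton_subset_iff.2 he),
    eRk_eq_zero_iff (singleton_subset_iff.2 (show e ∈ M.E \ (I \ {e}) from ⟨hI he, he'⟩)),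
    singleton_subset_iff, ← isLoop_iff, contract_isLoop_iff_mem_closure, and_iff_left he']

lemma indep_iff_forall_relRank_sdiff_singleton_ne_zero (hI : I ⊆ M.E) :
    M.Indep I ↔ ∀ e ∈ I, M.relRank I (I \ {e}) ≠ 0 := by
  rw [indep_iff_forall_notMem_closure_sdiff hI]
  exact forall₂_congr fun e he ↦ (relRank_sdiff_singleton_eq_zero_iff he hI).not.symm

lemma ext_relRank_sdiff_singleton {M₁ M₂ : Matroid α} (hE : M₁.E = M₂.E)
    (h : ∀ I ⊆ M₁.E, ∀ e ∈ I, M₁.relRank I (I \ {e}) = M₂.relRank I (I \ {e})) : M₁ = M₂ := by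
  refine ext_indep hE fun I hI ↦ ?_
  rw [indep_iff_forall_relRank_sdiff_singleton_ne_zero hI,
    indep_iff_forall_relRank_sdiff_singleton_ne_zero (hI.trans hE.subset)]
  exact forall₂_congr fun e he ↦ by rw [h I hI e he]

end Matroid

theorem stmt_8 (M M' : Matroid α) (hE : M'.E = M.E) :
    M' = M✶ ↔
      ∀ A B : Set α, B ⊆ A → A ⊆ M.E →
        M.relRank A B + M'.relRank (M.E \ B) (M.E \ A) = (A \ B).encard := by
  refine ⟨by rintro rfl A B hBA hA; exact relRank_add_relRank_dual hBA hA,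
    fun H ↦ ext_relRank_sdiff_singleton (by rw [hE, dual_ground]) fun I hI e he ↦ ?_⟩
  rw [hE] at hI
  have hBA : M.E \ I ⊆ M.E \ (I \ {e}) := sdiff_subset_sdiff_right sdiff_subset
  have hsum := H _ _ hBA sdiff_subset
  have hsum_dual := relRank_add_relRank_dual hBA sdiff_subset
  have hdiff : (M.E \ (I \ {e})) \ (M.E \ I) = {e} := by
    ext x
    simp only [mem_sdiff, mem_singleton_iff]
    grind
  rw [sdiff_sdiff_cancel_left hI, sdiff_sdiff_cancel_left (sdiff_subset.trans hI), hdiff,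
    encard_singleton] at hsum hsum_dual
  have hfin : M.relRank (M.E \ (I \ {e})) (M.E \ I) ≠ ⊤ := fun h ↦ by simp [h] at hsum
  exact WithTop.add_left_cancel hfin (hsum.trans hsum_dual.symm)
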